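/- Let Γ be a finite connected multigraph with a basepoint vertex v₀ and a genus function g assigning a natural number to each vertex. Define deg(Γ) = Σ_{v ≠ v₀} (valence(v) + 2·g(v) - 2), where valence counts half-edges (loops count twice). If Γ' is obtained from Γ by collapsing a non-loop edge e between v₀ and another vertex v (merging v into v₀, adding g(v) to g(v₀)), and every non-basepoint vertex of Γ satisfies valence(v) ≥ 3 or (valence(v) ≥ 1 and g(v) ≥ 1), then deg(Γ') < deg(Γ). -/
import Mathlib


/-- A finite multigraph with basepoint and genus labels, recorded by the data relevant to
degree computations: a finite set of vertices, a basepoint, and valence (number of half-edges,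
loops counting twice) and genus functions on vertices. -/
structure BasedGraph (V : Type) [DecidableEq V] where
  verts : Finset V
  base : V
  base_mem : base ∈ verts
  val : V → ℕ
  genus : V → ℕ

/-- The degree: the sum over non-basepoint vertices of `valence + 2·genus - 2`. -/
def BasedGraph.deg {V : Type} [DecidableEq V] (Γ : BasedGraph V) : ℤ :=
  ∑ v ∈ Γ.verts.erase Γ.base, ((Γ.val v : ℤ) + 2 * (Γ.genus v : ℤ) - 2)

/-- Collapsing a non-loop edge between the basepoint `v₀` and another vertex `v` (merging `v`
into `v₀`, valences satisfying `val(merged) = val(v₀) + val(v) - 2`, genus of the merged vertex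
being the sum) strictly decreases degree, provided every non-basepoint vertex has valence ≥ 3,
or valence ≥ 1 and genus ≥ 1. -/
theorem deg_lt_of_collapse_base_edge
    {V : Type} [DecidableEq V] (Γ Γ' : BasedGraph V) (v : V)
    (hv : v ∈ Γ.verts) (hvne : v ≠ Γ.base)
    (hcond : ∀ u ∈ Γ.verts, u ≠ Γ.base →
      3 ≤ Γ.val u ∨ (1 ≤ Γ.val u ∧ 1 ≤ Γ.genus u))
    (hverts : Γ'.verts = Γ.verts.erase v)
    (hbase : Γ'.base = Γ.base)
    (hvalbase : Γ'.val Γ.base + 2 = Γ.val Γ.base + Γ.val v)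
    (hgenbase : Γ'.genus Γ.base = Γ.genus Γ.base + Γ.genus v)
    (hval : ∀ u ∈ Γ.verts.erase v, u ≠ Γ.base → Γ'.val u = Γ.val u)
    (hgen : ∀ u ∈ Γ.verts.erase v, u ≠ Γ.base → Γ'.genus u = Γ.genus u) :
    Γ'.deg < Γ.deg := by
  have hvmem : v ∈ Γ.verts.erase Γ.base := Finset.mem_erase.mpr ⟨hvne, hv⟩
  have hsum : Γ.deg =
      ((Γ.val v : ℤ) + 2 * (Γ.genus v : ℤ) - 2) +
        ∑ u ∈ (Γ.verts.erase Γ.base).erase v,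
          ((Γ.val u : ℤ) + 2 * (Γ.genus u : ℤ) - 2) := by
    exact (Finset.add_sum_erase _ _ hvmem).symm
  have hsum' : Γ'.deg =
      ∑ u ∈ (Γ.verts.erase Γ.base).erase v,
        ((Γ.val u : ℤ) + 2 * (Γ.genus u : ℤ) - 2) := by
    rw [BasedGraph.deg, hverts, hbase, Finset.erase_right_comm]
    refine Finset.sum_congr rfl ?_
    intro u hu
    obtain ⟨hune, hu'⟩ := Finset.mem_erase.mp hu
    have hub : u ≠ Γ.base := (Finset.mem_erase.mp hu').1
    have huv : u ∈ Γ.verts.erase v :=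
      Finset.mem_erase.mpr ⟨hune, (Finset.mem_erase.mp hu').2⟩
    rw [hval u huv hub, hgen u huv hub]
  rw [hsum, hsum']
  have hpos : 1 ≤ (Γ.val v : ℤ) + 2 * (Γ.genus v : ℤ) - 2 := by
    rcases hcond v hv hvne with h | ⟨h1, h2⟩
    · have : (3 : ℤ) ≤ (Γ.val v : ℤ) := by exact_mod_cast h
      omega
    · have h1' : (1 : ℤ) ≤ (Γ.val v : ℤ) := by exact_mod_cast h1
      have h2' : (1 : ℤ) ≤ (Γ.genus v : ℤ) := by exact_mod_cast h2
      omega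
  omega
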